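/- arXiv:1307.8354 — 7 statements merged into one kernel-verified Lean document; each statement's English description precedes it below -/
import Mathlib

section
/- Every A₃-molecule is isomorphic to one of: a single vertex with τ ∈ {∅, {1,2,3}}, a path of three vertices with τ-invariants ({1},{2},{3}), a path of three vertices with τ-invariants ({2,3},{1,3},{1,2}), or an edge of two vertices with τ-invariants ({2},{1,3}). -/
open scoped Classical

/-- An admissible `S`-labeled graph. -/
structure SLG (V S : Type) where
  m : V → V → ℕ
  τ : V → Set S
  bipartite : ∃ c : V → Bool, ∀ u v, m u v ≠ 0 → c u ≠ c v
  subset_zero : ∀ u v, τ u ⊆ τ v → m u v = 0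
  incomp_symm : ∀ u v, ¬ τ u ⊆ τ v → ¬ τ v ⊆ τ u → m u v = m v u

/-- A simple edge: directed both ways. -/
def SLG.Simple {V S : Type} (G : SLG V S) (u v : V) : Prop :=
  G.m u v ≠ 0 ∧ G.m v u ≠ 0

/-- The edge `(u,v)` activates the bond `(i,j)`: precisely one of `τ u`, `τ v`
contains `i`, and precisely the other contains `j`. -/
def SLG.Activates {V S : Type} (G : SLG V S) (u v : V) (i j : S) : Prop :=
  (i ∈ G.τ u ∧ i ∉ G.τ v ∧ j ∈ G.τ v ∧ j ∉ G.τ u) ∨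
  (i ∈ G.τ v ∧ i ∉ G.τ u ∧ j ∈ G.τ u ∧ j ∉ G.τ v)

/-- `N²_{ij}(G; u, v)`: weighted count of alternating paths of type `(i,j)`
of length 2 from `u` to `v`. -/
noncomputable def SLG.N2 {V S : Type} [Fintype V] (G : SLG V S) (i j : S) (u v : V) : ℕ :=
  ∑ w : V, if i ∈ G.τ w ∧ j ∉ G.τ w then G.m u w * G.m w v else 0

/-- `N³_{ij}(G; u, v)`: weighted count of alternating paths of type `(i,j)`
of length 3 from `u` to `v`. -/
noncomputable def SLG.N3 {V S : Type} [Fintype V] (G : SLG V S) (i j : S) (u v : V) : ℕ :=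
  ∑ w₁ : V, ∑ w₂ : V,
    if (i ∈ G.τ w₁ ∧ j ∉ G.τ w₁) ∧ (j ∈ G.τ w₂ ∧ i ∉ G.τ w₂) then
      G.m u w₁ * G.m w₁ w₂ * G.m w₂ v else 0

/-- A molecular graph: an admissible `S`-labeled graph satisfying the simplicity
rule, compatibility rule, bonding rule and the local polygon rules. -/
structure MolGraph (V S : Type) [Fintype V] (bond : S → S → Prop) extends SLG V S where
  SR : ∀ u v, toSLG.Simple u v → m u v = 1
  CR : ∀ u v, m u v ≠ 0 → ∀ i, i ∈ τ u → i ∉ τ v → ∀ j, j ∈ τ v → j ∉ τ u → bond i j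
  BR : ∀ i j, bond i j → ∀ u, i ∈ τ u → j ∉ τ u →
    ∃! v, toSLG.Simple u v ∧ toSLG.Activates u v i j
  LPR2 : ∀ i j u v, i ∈ τ u → j ∈ τ u → i ∉ τ v → j ∉ τ v → (∃ k, k ∈ τ v ∧ k ∉ τ u) →
    toSLG.N2 i j u v = toSLG.N2 j i u v
  LPR3 : ∀ k i j l, k ≠ i → k ≠ j → k ≠ l → i ≠ j → i ≠ l → j ≠ l →
    bond k i → bond i j → bond j l → ¬ bond k j → ¬ bond i l → ¬ bond k l →
    ∀ u v, i ∈ τ u → j ∈ τ u → i ∉ τ v → j ∉ τ v → k ∉ τ u → l ∉ τ u → k ∈ τ v → l ∈ τ v →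
      toSLG.N3 i j u v = toSLG.N3 j i u v

/-- The bond relation of the Coxeter system of type `A₃`, with `S` identified with
`Fin 3` (label `k` corresponds to the paper's `k+1`); the bonds are `(1,2)` and `(2,3)`. -/
def bondA3 : Fin 3 → Fin 3 → Prop := fun i j => i.val + 1 = j.val ∨ j.val + 1 = i.val


instance : DecidableRel bondA3 := fun i j => by unfold bondA3; infer_instance

section Helpers

variable {V : Type} [Fintype V] (G : MolGraph V (Fin 3) bondA3)

lemma not_simple_self (v : V) : ¬ G.toSLG.Simple v v :=
  fun h => h.1 (G.subset_zero v v (subset_refl _))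

lemma ne_sets {s t : Set (Fin 3)} (x : Fin 3) (hx : x ∈ t) (hns : x ∉ s) : s ≠ t :=
  fun h => hns (h ▸ hx)

lemma ext3 {s t : Set (Fin 3)} (h0 : ((0:Fin 3) ∈ s ↔ (0:Fin 3) ∈ t))
    (h1 : ((1:Fin 3) ∈ s ↔ (1:Fin 3) ∈ t)) (h2 : ((2:Fin 3) ∈ s ↔ (2:Fin 3) ∈ t)) :
    s = t := by
  ext x
  fin_cases x
  · exact h0
  · exact h1
  · exact h2

lemma br_unique {i j : Fin 3} {u : V} (hb : bondA3 i j) (hi : i ∈ G.τ u) (hj : j ∉ G.τ u)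
    {x y : V} (hx : G.toSLG.Simple u x ∧ G.toSLG.Activates u x i j)
    (hy : G.toSLG.Simple u y ∧ G.toSLG.Activates u y i j) : x = y := by
  obtain ⟨w, -, hw⟩ := G.BR i j hb u hi hj
  rw [hw x hx, hw y hy]

lemma comp_all (hconn : ∀ u v : V, Relation.ReflTransGen G.toSLG.Simple u v)
    {P : V → Prop} (u : V) (hu : P u)
    (hcl : ∀ x y, P x → G.toSLG.Simple x y → P y) : ∀ v, P v := by
  intro v
  have h := hconn u v
  induction h with
  | refl => exact hu
  | tail h1 h2 ih => exact hcl _ _ ih h2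

lemma nbr0 {u v : V} (hu : G.τ u = {0}) (h : G.toSLG.Simple u v) : G.τ v = {1} := by
  have hns1 : ¬ G.τ u ⊆ G.τ v := fun hss => h.1 (G.subset_zero _ _ hss)
  have hns2 : ¬ G.τ v ⊆ G.τ u := fun hss => h.2 (G.subset_zero _ _ hss)
  have h0v : (0:Fin 3) ∉ G.τ v := by
    intro h0
    refine hns1 ?_
    rw [hu]
    intro x hx
    rw [Set.mem_singleton_iff] at hx
    subst hx
    exact h0
  have hj : ∀ j, j ∈ G.τ v → j = 1 := by
    intro j hjv
    have hjnu : j ∉ G.τ u := by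
      rw [hu]
      intro hx
      rw [Set.mem_singleton_iff] at hx
      subst hx
      exact h0v hjv
    have hb := G.CR u v h.1 0 (by rw [hu]; rfl) h0v j hjv hjnu
    fin_cases j
    · exact absurd hjv h0v
    · rfl
    · exact absurd hb (by decide)
  have h1v : (1:Fin 3) ∈ G.τ v := by
    obtain ⟨j, hjv, -⟩ := Set.not_subset.mp hns2
    exact (hj j hjv) ▸ hjv
  ext x
  simp only [Set.mem_singleton_iff]
  exact ⟨hj x, fun hx => hx ▸ h1v⟩

end Helpers

section Helpers2
variable {V : Type} [Fintype V] (G : MolGraph V (Fin 3) bondA3)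

lemma nbr2 {u v : V} (hu : G.τ u = {2}) (h : G.toSLG.Simple u v) : G.τ v = {1} := by
  have hns1 : ¬ G.τ u ⊆ G.τ v := fun hss => h.1 (G.subset_zero _ _ hss)
  have hns2 : ¬ G.τ v ⊆ G.τ u := fun hss => h.2 (G.subset_zero _ _ hss)
  have h2v : (2:Fin 3) ∉ G.τ v := by
    intro h2
    refine hns1 ?_
    rw [hu]
    intro x hx
    rw [Set.mem_singleton_iff] at hx
    subst hx
    exact h2
  have hj : ∀ j, j ∈ G.τ v → j = 1 := by
    intro j hjv
    have hjnu : j ∉ G.τ u := by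
      rw [hu]
      intro hx
      rw [Set.mem_singleton_iff] at hx
      subst hx
      exact h2v hjv
    have hb := G.CR u v h.1 2 (by rw [hu]; rfl) h2v j hjv hjnu
    fin_cases j
    · exact absurd hb (by decide)
    · rfl
    · exact absurd hjv h2v
  have h1v : (1:Fin 3) ∈ G.τ v := by
    obtain ⟨j, hjv, -⟩ := Set.not_subset.mp hns2
    exact (hj j hjv) ▸ hjv
  ext x
  simp only [Set.mem_singleton_iff]
  exact ⟨hj x, fun hx => hx ▸ h1v⟩

lemma nbr1 {u v : V} (hu : G.τ u = {1}) (h : G.toSLG.Simple u v) :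
    G.τ v = {0} ∨ G.τ v = {2} ∨ G.τ v = ({0,2} : Set (Fin 3)) := by
  have hns1 : ¬ G.τ u ⊆ G.τ v := fun hss => h.1 (G.subset_zero _ _ hss)
  have hns2 : ¬ G.τ v ⊆ G.τ u := fun hss => h.2 (G.subset_zero _ _ hss)
  have h1v : (1:Fin 3) ∉ G.τ v := by
    intro h1
    refine hns1 ?_
    rw [hu]
    intro x hx
    rw [Set.mem_singleton_iff] at hx
    subst hx
    exact h1
  by_cases hv0 : (0:Fin 3) ∈ G.τ v <;> by_cases hv2 : (2:Fin 3) ∈ G.τ v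
  · right; right
    exact ext3 (by simp [hv0]) (by simp [h1v]) (by simp [hv2])
  · left
    exact ext3 (by simp [hv0]) (by simp [h1v]) (by simp [hv2])
  · right; left
    exact ext3 (by simp [hv0]) (by simp [h1v]) (by simp [hv2])
  · exfalso
    obtain ⟨j, hjv, -⟩ := Set.not_subset.mp hns2
    fin_cases j
    · exact hv0 hjv
    · exact h1v hjv
    · exact hv2 hjv

lemma nbr01 {u v : V} (hu : G.τ u = ({0,1} : Set (Fin 3))) (h : G.toSLG.Simple u v) :
    G.τ v = ({0,2} : Set (Fin 3)) := by
  have hns1 : ¬ G.τ u ⊆ G.τ v := fun hss => h.1 (G.subset_zero _ _ hss)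
  have hns2 : ¬ G.τ v ⊆ G.τ u := fun hss => h.2 (G.subset_zero _ _ hss)
  have h2v : (2:Fin 3) ∈ G.τ v := by
    obtain ⟨j, hjv, hjnu⟩ := Set.not_subset.mp hns2
    fin_cases j
    · exact absurd (by rw [hu]; simp) hjnu
    · exact absurd (by rw [hu]; simp) hjnu
    · exact hjv
  have h2nu : (2:Fin 3) ∉ G.τ u := by rw [hu]; simp
  have h1v : (1:Fin 3) ∉ G.τ v := by
    intro h1
    have h0nv : (0:Fin 3) ∉ G.τ v := by
      intro h0
      refine hns1 ?_
      rw [hu]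
      intro x hx
      fin_cases x
      · exact h0
      · exact h1
      · simp at hx
    exact absurd (G.CR u v h.1 0 (by rw [hu]; simp) h0nv 2 h2v h2nu) (by decide)
  have h0v : (0:Fin 3) ∈ G.τ v := by
    by_contra h0nv
    exact absurd (G.CR u v h.1 0 (by rw [hu]; simp) h0nv 2 h2v h2nu) (by decide)
  exact ext3 (by simp [h0v]) (by simp [h1v]) (by simp [h2v])

lemma nbr12 {u v : V} (hu : G.τ u = ({1,2} : Set (Fin 3))) (h : G.toSLG.Simple u v) :
    G.τ v = ({0,2} : Set (Fin 3)) := by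
  have hns1 : ¬ G.τ u ⊆ G.τ v := fun hss => h.1 (G.subset_zero _ _ hss)
  have hns2 : ¬ G.τ v ⊆ G.τ u := fun hss => h.2 (G.subset_zero _ _ hss)
  have h0v : (0:Fin 3) ∈ G.τ v := by
    obtain ⟨j, hjv, hjnu⟩ := Set.not_subset.mp hns2
    fin_cases j
    · exact hjv
    · exact absurd (by rw [hu]; simp) hjnu
    · exact absurd (by rw [hu]; simp) hjnu
  have h0nu : (0:Fin 3) ∉ G.τ u := by rw [hu]; simp
  have h1v : (1:Fin 3) ∉ G.τ v := by
    intro h1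
    have h2nv : (2:Fin 3) ∉ G.τ v := by
      intro h2
      refine hns1 ?_
      rw [hu]
      intro x hx
      fin_cases x
      · simp at hx
      · exact h1
      · exact h2
    exact absurd (G.CR u v h.1 2 (by rw [hu]; simp) h2nv 0 h0v h0nu) (by decide)
  have h2v : (2:Fin 3) ∈ G.τ v := by
    by_contra h2nv
    exact absurd (G.CR u v h.1 2 (by rw [hu]; simp) h2nv 0 h0v h0nu) (by decide)
  exact ext3 (by simp [h0v]) (by simp [h1v]) (by simp [h2v])

lemma nbr02 {u v : V} (hu : G.τ u = ({0,2} : Set (Fin 3))) (h : G.toSLG.Simple u v) :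
    G.τ v = {1} ∨ G.τ v = ({0,1} : Set (Fin 3)) ∨ G.τ v = ({1,2} : Set (Fin 3)) := by
  have hns1 : ¬ G.τ u ⊆ G.τ v := fun hss => h.1 (G.subset_zero _ _ hss)
  have hns2 : ¬ G.τ v ⊆ G.τ u := fun hss => h.2 (G.subset_zero _ _ hss)
  have h1v : (1:Fin 3) ∈ G.τ v := by
    obtain ⟨j, hjv, hjnu⟩ := Set.not_subset.mp hns2
    fin_cases j
    · exact absurd (by rw [hu]; simp) hjnu
    · exact hjv
    · exact absurd (by rw [hu]; simp) hjnu
  by_cases hv0 : (0:Fin 3) ∈ G.τ v <;> by_cases hv2 : (2:Fin 3) ∈ G.τ v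
  · exfalso
    refine hns1 ?_
    rw [hu]
    intro x hx
    fin_cases x
    · exact hv0
    · simp at hx
    · exact hv2
  · right; left
    exact ext3 (by simp [hv0]) (by simp [h1v]) (by simp [hv2])
  · right; right
    exact ext3 (by simp [hv0]) (by simp [h1v]) (by simp [hv2])
  · left
    exact ext3 (by simp [hv0]) (by simp [h1v]) (by simp [hv2])

end Helpers2
section Helpers3
variable {V : Type} [Fintype V] (G : MolGraph V (Fin 3) bondA3)

lemma equiv_three (a b c : V) (hab : a ≠ b) (hac : a ≠ c) (hbc : b ≠ c)
    (hall : ∀ v, v = a ∨ v = b ∨ v = c)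
    (hsab : G.toSLG.Simple a b) (hsbc : G.toSLG.Simple b c) (hnac : ¬ G.toSLG.Simple a c) :
    ∃ e : V ≃ Fin 3, e a = 0 ∧ e b = 1 ∧ e c = 2 ∧
      ∀ u v, G.toSLG.Simple u v ↔ bondA3 (e u) (e v) := by
  classical
  set f : V → Fin 3 := fun v => if v = a then 0 else if v = b then 1 else 2 with hfdef
  set g : Fin 3 → V := fun i => if i = 0 then a else if i = 1 then b else c with hgdef
  have ea : f a = 0 := by simp [hfdef]
  have eb : f b = 1 := by simp [hfdef, Ne.symm hab]
  have ec : f c = 2 := by simp [hfdef, Ne.symm hac, Ne.symm hbc]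
  have hl : Function.LeftInverse g f := by
    intro v
    rcases hall v with h | h | h <;> rw [h]
    · rw [ea]; simp [hgdef]
    · rw [eb]; simp [hgdef]
    · rw [ec]; simp [hgdef]
  have hr : Function.RightInverse g f := by
    intro i
    fin_cases i
    · show f (g 0) = 0
      have : g 0 = a := by simp [hgdef]
      rw [this, ea]
    · show f (g 1) = 1
      have : g 1 = b := by simp [hgdef]
      rw [this, eb]
    · show f (g 2) = 2
      have : g 2 = c := by simp [hgdef]
      rw [this, ec]
  refine ⟨⟨f, g, hl, hr⟩, ea, eb, ec, ?_⟩
  intro u v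
  rcases hall u with hu | hu | hu <;> rcases hall v with hv | hv | hv <;>
    rw [hu, hv] <;> simp only [Equiv.coe_fn_mk, ea, eb, ec]
  · exact iff_of_false (not_simple_self G a) (by decide)
  · exact iff_of_true hsab (by decide)
  · exact iff_of_false hnac (by decide)
  · exact iff_of_true ⟨hsab.2, hsab.1⟩ (by decide)
  · exact iff_of_false (not_simple_self G b) (by decide)
  · exact iff_of_true hsbc (by decide)
  · exact iff_of_false (fun h => hnac ⟨h.2, h.1⟩) (by decide)
  · exact iff_of_true ⟨hsbc.2, hsbc.1⟩ (by decide)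
  · exact iff_of_false (not_simple_self G c) (by decide)

lemma equiv_two (a b : V) (hab : a ≠ b) (hall : ∀ v, v = a ∨ v = b)
    (hs : G.toSLG.Simple a b) :
    ∃ e : V ≃ Fin 2, e.symm 0 = a ∧ e.symm 1 = b ∧
      ∀ u v, G.toSLG.Simple u v ↔ e u ≠ e v := by
  classical
  set f : V → Fin 2 := fun v => if v = a then 0 else 1 with hfdef
  set g : Fin 2 → V := fun i => if i = 0 then a else b with hgdef
  have ea : f a = 0 := by simp [hfdef]
  have eb : f b = 1 := by simp [hfdef, Ne.symm hab]
  have ga : g 0 = a := by simp [hgdef]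
  have gb : g 1 = b := by simp [hgdef]
  have hl : Function.LeftInverse g f := by
    intro v
    rcases hall v with h | h <;> rw [h]
    · rw [ea, ga]
    · rw [eb, gb]
  have hr : Function.RightInverse g f := by
    intro i
    fin_cases i
    · show f (g 0) = 0
      rw [ga, ea]
    · show f (g 1) = 1
      rw [gb, eb]
  refine ⟨⟨f, g, hl, hr⟩, ga, gb, ?_⟩
  intro u v
  rcases hall u with hu | hu <;> rcases hall v with hv | hv <;>
    rw [hu, hv] <;> simp only [Equiv.coe_fn_mk, ea, eb]
  · exact iff_of_false (not_simple_self G a) (by simp)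
  · exact iff_of_true hs (by decide)
  · exact iff_of_true ⟨hs.2, hs.1⟩ (by decide)
  · exact iff_of_false (not_simple_self G b) (by simp)

end Helpers3
section Core
variable {V : Type} [Fintype V] (G : MolGraph V (Fin 3) bondA3)

lemma act_of {u v : V} {i j : Fin 3} (h1 : i ∈ G.τ u) (h2 : i ∉ G.τ v)
    (h3 : j ∈ G.τ v) (h4 : j ∉ G.τ u) : G.toSLG.Activates u v i j :=
  Or.inl ⟨h1, h2, h3, h4⟩

lemma distinct_of {u v : V} {s t : Set (Fin 3)} (hu : G.τ u = s) (hv : G.τ v = t)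
    (hst : s ≠ t) : u ≠ v := fun h => hst (by rw [← hu, ← hv, h])

def Concl {V : Type} [Fintype V] (G : MolGraph V (Fin 3) bondA3) : Prop :=
    ((∀ u v : V, u = v) ∧ ((∀ v, G.τ v = ∅) ∨ (∀ v, G.τ v = Set.univ))) ∨
    (∃ e : V ≃ Fin 3, (∀ v, G.τ v = {e v}) ∧
      (∀ u v, G.toSLG.Simple u v ↔ bondA3 (e u) (e v))) ∨
    (∃ e : V ≃ Fin 3, (∀ v, G.τ v = {e v}ᶜ) ∧
      (∀ u v, G.toSLG.Simple u v ↔ bondA3 (e u) (e v))) ∨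
    (∃ e : V ≃ Fin 2, G.τ (e.symm 0) = {1} ∧ G.τ (e.symm 1) = ({0, 2} : Set (Fin 3)) ∧
      (∀ u v, G.toSLG.Simple u v ↔ e u ≠ e v))

lemma from_one (hconn : ∀ u v : V, Relation.ReflTransGen G.toSLG.Simple u v)
    (u : V) (hu : G.τ u = {1}) : Concl G := by
  obtain ⟨v, ⟨hsv, hactv⟩, -⟩ := G.BR 1 0 (by decide) u (by simp [hu]) (by simp [hu])
  have h0v : (0:Fin 3) ∈ G.τ v := by
    rcases hactv with ⟨-, -, h, -⟩ | ⟨-, h2, -, -⟩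
    · exact h
    · exact absurd (show (1:Fin 3) ∈ G.τ u by simp [hu]) h2
  rcases nbr1 G hu hsv with hv | hv | hv
  · -- τ v = {0} : three-vertex path {0},{1},{2}
    obtain ⟨w, ⟨hsw, hactw⟩, -⟩ := G.BR 1 2 (by decide) u (by simp [hu]) (by simp [hu])
    have h2w : (2:Fin 3) ∈ G.τ w := by
      rcases hactw with ⟨-, -, h, -⟩ | ⟨-, h2, -, -⟩
      · exact h
      · exact absurd (show (1:Fin 3) ∈ G.τ u by simp [hu]) h2
    rcases nbr1 G hu hsw with hw | hw | hw
    · exfalso; rw [hw] at h2w; simp at h2w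
    · -- hw : τ w = {2}, the main case
      have Nu : ∀ x, G.toSLG.Simple u x → x = v ∨ x = w := by
        intro x hx
        rcases nbr1 G hu hx with h | h | h
        · exact Or.inl (br_unique G (by decide) (show (1:Fin 3) ∈ G.τ u by simp [hu])
            (show (0:Fin 3) ∉ G.τ u by simp [hu])
            ⟨hx, act_of G (by simp [hu]) (by simp [h]) (by simp [h]) (by simp [hu])⟩
            ⟨hsv, hactv⟩)
        · exact Or.inr (br_unique G (by decide) (show (1:Fin 3) ∈ G.τ u by simp [hu])
            (show (2:Fin 3) ∉ G.τ u by simp [hu])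
            ⟨hx, act_of G (by simp [hu]) (by simp [h]) (by simp [h]) (by simp [hu])⟩
            ⟨hsw, hactw⟩)
        · exact Or.inl (br_unique G (by decide) (show (1:Fin 3) ∈ G.τ u by simp [hu])
            (show (0:Fin 3) ∉ G.τ u by simp [hu])
            ⟨hx, act_of G (by simp [hu]) (by simp [h]) (by simp [h]) (by simp [hu])⟩
            ⟨hsv, hactv⟩)
      have Nv : ∀ x, G.toSLG.Simple v x → x = u := by
        intro x hx
        have hτx := nbr0 G hv hx
        exact br_unique G (by decide) (show (0:Fin 3) ∈ G.τ v by simp [hv])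
          (show (1:Fin 3) ∉ G.τ v by simp [hv])
          ⟨hx, act_of G (by simp [hv]) (by simp [hτx]) (by simp [hτx]) (by simp [hv])⟩
          ⟨⟨hsv.2, hsv.1⟩, act_of G (by simp [hv]) (by simp [hu]) (by simp [hu]) (by simp [hv])⟩
      have Nw : ∀ x, G.toSLG.Simple w x → x = u := by
        intro x hx
        have hτx := nbr2 G hw hx
        exact br_unique G (by decide) (show (2:Fin 3) ∈ G.τ w by simp [hw])
          (show (1:Fin 3) ∉ G.τ w by simp [hw])
          ⟨hx, act_of G (by simp [hw]) (by simp [hτx]) (by simp [hτx]) (by simp [hw])⟩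
          ⟨⟨hsw.2, hsw.1⟩, act_of G (by simp [hw]) (by simp [hu]) (by simp [hu]) (by simp [hw])⟩
      have hall : ∀ x, x = v ∨ x = u ∨ x = w := by
        refine comp_all G hconn u (Or.inr (Or.inl rfl)) ?_
        intro x y hx hsxy
        rcases hx with h | h | h
        · rw [h] at hsxy; exact Or.inr (Or.inl (Nv y hsxy))
        · rw [h] at hsxy
          rcases Nu y hsxy with h' | h'
          · exact Or.inl h'
          · exact Or.inr (Or.inr h')
        · rw [h] at hsxy; exact Or.inr (Or.inl (Nw y hsxy))
      have hnvw : ¬ G.toSLG.Simple v w := fun h =>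
        ne_sets 2 (by simp) (by simp) ((nbr0 G hv h).symm.trans hw)
      obtain ⟨e, hev, heu, hew, hiff⟩ := equiv_three G v u w
        (distinct_of G hv hu (ne_sets 1 (by simp) (by simp)))
        (distinct_of G hv hw (ne_sets 2 (by simp) (by simp)))
        (distinct_of G hu hw (ne_sets 2 (by simp) (by simp)))
        hall ⟨hsv.2, hsv.1⟩ hsw hnvw
      refine Or.inr (Or.inl ⟨e, ?_, hiff⟩)
      intro x
      rcases hall x with h | h | h <;> rw [h]
      · rw [hev]; exact hv
      · rw [heu]; exact hu
      · rw [hew]; exact hw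
    · -- hw : τ w = {0,2} : contradiction with uniqueness of the (1,0)-neighbour
      exfalso
      have hwv : w = v := br_unique G (by decide) (show (1:Fin 3) ∈ G.τ u by simp [hu])
        (show (0:Fin 3) ∉ G.τ u by simp [hu])
        ⟨hsw, act_of G (by simp [hu]) (by simp [hw]) (by simp [hw]) (by simp [hu])⟩
        ⟨hsv, hactv⟩
      rw [hwv] at hw
      exact ne_sets 2 (by simp) (by simp) (hv.symm.trans hw)
  · exfalso; rw [hv] at h0v; simp at h0v
  · -- τ v = {0,2} : two-vertex molecule
    have Nu : ∀ x, G.toSLG.Simple u x → x = v := by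
      intro x hx
      rcases nbr1 G hu hx with h | h | h
      · exact br_unique G (by decide) (show (1:Fin 3) ∈ G.τ u by simp [hu])
          (show (0:Fin 3) ∉ G.τ u by simp [hu])
          ⟨hx, act_of G (by simp [hu]) (by simp [h]) (by simp [h]) (by simp [hu])⟩
          ⟨hsv, hactv⟩
      · exact br_unique G (by decide) (show (1:Fin 3) ∈ G.τ u by simp [hu])
          (show (2:Fin 3) ∉ G.τ u by simp [hu])
          ⟨hx, act_of G (by simp [hu]) (by simp [h]) (by simp [h]) (by simp [hu])⟩
          ⟨hsv, act_of G (by simp [hu]) (by simp [hv]) (by simp [hv]) (by simp [hu])⟩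
      · exact br_unique G (by decide) (show (1:Fin 3) ∈ G.τ u by simp [hu])
          (show (0:Fin 3) ∉ G.τ u by simp [hu])
          ⟨hx, act_of G (by simp [hu]) (by simp [h]) (by simp [h]) (by simp [hu])⟩
          ⟨hsv, hactv⟩
    have Nv : ∀ x, G.toSLG.Simple v x → x = u := by
      intro x hx
      rcases nbr02 G hv hx with h | h | h
      · exact br_unique G (by decide) (show (0:Fin 3) ∈ G.τ v by simp [hv])
          (show (1:Fin 3) ∉ G.τ v by simp [hv])
          ⟨hx, act_of G (by simp [hv]) (by simp [h]) (by simp [h]) (by simp [hv])⟩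
          ⟨⟨hsv.2, hsv.1⟩, act_of G (by simp [hv]) (by simp [hu]) (by simp [hu]) (by simp [hv])⟩
      · exact br_unique G (by decide) (show (2:Fin 3) ∈ G.τ v by simp [hv])
          (show (1:Fin 3) ∉ G.τ v by simp [hv])
          ⟨hx, act_of G (by simp [hv]) (by simp [h]) (by simp [h]) (by simp [hv])⟩
          ⟨⟨hsv.2, hsv.1⟩, act_of G (by simp [hv]) (by simp [hu]) (by simp [hu]) (by simp [hv])⟩
      · exact br_unique G (by decide) (show (0:Fin 3) ∈ G.τ v by simp [hv])
          (show (1:Fin 3) ∉ G.τ v by simp [hv])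
          ⟨hx, act_of G (by simp [hv]) (by simp [h]) (by simp [h]) (by simp [hv])⟩
          ⟨⟨hsv.2, hsv.1⟩, act_of G (by simp [hv]) (by simp [hu]) (by simp [hu]) (by simp [hv])⟩
    have hall : ∀ x, x = u ∨ x = v := by
      refine comp_all G hconn u (Or.inl rfl) ?_
      intro x y hx hsxy
      rcases hx with h | h
      · rw [h] at hsxy; exact Or.inr (Nu y hsxy)
      · rw [h] at hsxy; exact Or.inl (Nv y hsxy)
    obtain ⟨e, h0, h1, hiff⟩ := equiv_two G u v
      (distinct_of G hu hv (ne_sets 0 (by simp) (by simp))) hall hsv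
    exact Or.inr (Or.inr (Or.inr ⟨e, by rw [h0]; exact hu, by rw [h1]; exact hv, hiff⟩))

end Core
section Core2
variable {V : Type} [Fintype V] (G : MolGraph V (Fin 3) bondA3)

lemma from_02 (hconn : ∀ u v : V, Relation.ReflTransGen G.toSLG.Simple u v)
    (u : V) (hu : G.τ u = ({0,2} : Set (Fin 3))) : Concl G := by
  obtain ⟨v, ⟨hsv, hactv⟩, -⟩ := G.BR 0 1 (by decide) u (by simp [hu]) (by simp [hu])
  have h0v : (0:Fin 3) ∉ G.τ v := by
    rcases hactv with ⟨-, h, -, -⟩ | ⟨-, h2, -, -⟩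
    · exact h
    · exact absurd (show (0:Fin 3) ∈ G.τ u by simp [hu]) h2
  rcases nbr02 G hu hsv with hv | hv | hv
  · -- τ v = {1} : two-vertex molecule
    have Nu : ∀ x, G.toSLG.Simple u x → x = v := by
      intro x hx
      rcases nbr02 G hu hx with h | h | h
      · exact br_unique G (by decide) (show (0:Fin 3) ∈ G.τ u by simp [hu])
          (show (1:Fin 3) ∉ G.τ u by simp [hu])
          ⟨hx, act_of G (by simp [hu]) (by simp [h]) (by simp [h]) (by simp [hu])⟩
          ⟨hsv, hactv⟩
      · exact br_unique G (by decide) (show (2:Fin 3) ∈ G.τ u by simp [hu])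
          (show (1:Fin 3) ∉ G.τ u by simp [hu])
          ⟨hx, act_of G (by simp [hu]) (by simp [h]) (by simp [h]) (by simp [hu])⟩
          ⟨hsv, act_of G (by simp [hu]) (by simp [hv]) (by simp [hv]) (by simp [hu])⟩
      · exact br_unique G (by decide) (show (0:Fin 3) ∈ G.τ u by simp [hu])
          (show (1:Fin 3) ∉ G.τ u by simp [hu])
          ⟨hx, act_of G (by simp [hu]) (by simp [h]) (by simp [h]) (by simp [hu])⟩
          ⟨hsv, hactv⟩
    have Nv : ∀ x, G.toSLG.Simple v x → x = u := by
      intro x hx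
      rcases nbr1 G hv hx with h | h | h
      · exact br_unique G (by decide) (show (1:Fin 3) ∈ G.τ v by simp [hv])
          (show (0:Fin 3) ∉ G.τ v by simp [hv])
          ⟨hx, act_of G (by simp [hv]) (by simp [h]) (by simp [h]) (by simp [hv])⟩
          ⟨⟨hsv.2, hsv.1⟩, act_of G (by simp [hv]) (by simp [hu]) (by simp [hu]) (by simp [hv])⟩
      · exact br_unique G (by decide) (show (1:Fin 3) ∈ G.τ v by simp [hv])
          (show (2:Fin 3) ∉ G.τ v by simp [hv])
          ⟨hx, act_of G (by simp [hv]) (by simp [h]) (by simp [h]) (by simp [hv])⟩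
          ⟨⟨hsv.2, hsv.1⟩, act_of G (by simp [hv]) (by simp [hu]) (by simp [hu]) (by simp [hv])⟩
      · exact br_unique G (by decide) (show (1:Fin 3) ∈ G.τ v by simp [hv])
          (show (0:Fin 3) ∉ G.τ v by simp [hv])
          ⟨hx, act_of G (by simp [hv]) (by simp [h]) (by simp [h]) (by simp [hv])⟩
          ⟨⟨hsv.2, hsv.1⟩, act_of G (by simp [hv]) (by simp [hu]) (by simp [hu]) (by simp [hv])⟩
    have hall : ∀ x, x = v ∨ x = u := by
      refine comp_all G hconn u (Or.inr rfl) ?_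
      intro x y hx hsxy
      rcases hx with h | h
      · rw [h] at hsxy; exact Or.inr (Nv y hsxy)
      · rw [h] at hsxy; exact Or.inl (Nu y hsxy)
    obtain ⟨e, h0, h1, hiff⟩ := equiv_two G v u
      (distinct_of G hv hu (ne_sets 0 (by simp) (by simp))) hall ⟨hsv.2, hsv.1⟩
    exact Or.inr (Or.inr (Or.inr ⟨e, by rw [h0]; exact hv, by rw [h1]; exact hu, hiff⟩))
  · exfalso; rw [hv] at h0v; simp at h0v
  · -- τ v = {1,2} : three-vertex path {1,2},{0,2},{0,1}
    obtain ⟨w, ⟨hsw, hactw⟩, -⟩ := G.BR 2 1 (by decide) u (by simp [hu]) (by simp [hu])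
    have h2w : (2:Fin 3) ∉ G.τ w := by
      rcases hactw with ⟨-, h, -, -⟩ | ⟨-, h2, -, -⟩
      · exact h
      · exact absurd (show (2:Fin 3) ∈ G.τ u by simp [hu]) h2
    rcases nbr02 G hu hsw with hw | hw | hw
    · -- τ w = {1} : contradiction with uniqueness of the (0,1)-neighbour
      exfalso
      have hwv : w = v := br_unique G (by decide) (show (0:Fin 3) ∈ G.τ u by simp [hu])
        (show (1:Fin 3) ∉ G.τ u by simp [hu])
        ⟨hsw, act_of G (by simp [hu]) (by simp [hw]) (by simp [hw]) (by simp [hu])⟩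
        ⟨hsv, hactv⟩
      rw [hwv] at hw
      exact ne_sets 2 (by simp) (by simp) (hw.symm.trans hv)
    · -- hw : τ w = {0,1}, the main case
      have Nu : ∀ x, G.toSLG.Simple u x → x = v ∨ x = w := by
        intro x hx
        rcases nbr02 G hu hx with h | h | h
        · exact Or.inl (br_unique G (by decide) (show (0:Fin 3) ∈ G.τ u by simp [hu])
            (show (1:Fin 3) ∉ G.τ u by simp [hu])
            ⟨hx, act_of G (by simp [hu]) (by simp [h]) (by simp [h]) (by simp [hu])⟩
            ⟨hsv, hactv⟩)
        · exact Or.inr (br_unique G (by decide) (show (2:Fin 3) ∈ G.τ u by simp [hu])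
            (show (1:Fin 3) ∉ G.τ u by simp [hu])
            ⟨hx, act_of G (by simp [hu]) (by simp [h]) (by simp [h]) (by simp [hu])⟩
            ⟨hsw, hactw⟩)
        · exact Or.inl (br_unique G (by decide) (show (0:Fin 3) ∈ G.τ u by simp [hu])
            (show (1:Fin 3) ∉ G.τ u by simp [hu])
            ⟨hx, act_of G (by simp [hu]) (by simp [h]) (by simp [h]) (by simp [hu])⟩
            ⟨hsv, hactv⟩)
      have Nv : ∀ x, G.toSLG.Simple v x → x = u := by
        intro x hx
        have hτx := nbr12 G hv hx
        exact br_unique G (by decide) (show (1:Fin 3) ∈ G.τ v by simp [hv])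
          (show (0:Fin 3) ∉ G.τ v by simp [hv])
          ⟨hx, act_of G (by simp [hv]) (by simp [hτx]) (by simp [hτx]) (by simp [hv])⟩
          ⟨⟨hsv.2, hsv.1⟩, act_of G (by simp [hv]) (by simp [hu]) (by simp [hu]) (by simp [hv])⟩
      have Nw : ∀ x, G.toSLG.Simple w x → x = u := by
        intro x hx
        have hτx := nbr01 G hw hx
        exact br_unique G (by decide) (show (1:Fin 3) ∈ G.τ w by simp [hw])
          (show (2:Fin 3) ∉ G.τ w by simp [hw])
          ⟨hx, act_of G (by simp [hw]) (by simp [hτx]) (by simp [hτx]) (by simp [hw])⟩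
          ⟨⟨hsw.2, hsw.1⟩, act_of G (by simp [hw]) (by simp [hu]) (by simp [hu]) (by simp [hw])⟩
      have hall : ∀ x, x = v ∨ x = u ∨ x = w := by
        refine comp_all G hconn u (Or.inr (Or.inl rfl)) ?_
        intro x y hx hsxy
        rcases hx with h | h | h
        · rw [h] at hsxy; exact Or.inr (Or.inl (Nv y hsxy))
        · rw [h] at hsxy
          rcases Nu y hsxy with h' | h'
          · exact Or.inl h'
          · exact Or.inr (Or.inr h')
        · rw [h] at hsxy; exact Or.inr (Or.inl (Nw y hsxy))
      have hnvw : ¬ G.toSLG.Simple v w := fun h =>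
        ne_sets 1 (by simp) (by simp) ((nbr12 G hv h).symm.trans hw)
      have c0 : ({(0:Fin 3)} : Set (Fin 3))ᶜ = ({1,2} : Set (Fin 3)) :=
        ext3 (by simp) (by simp) (by simp)
      have c1 : ({(1:Fin 3)} : Set (Fin 3))ᶜ = ({0,2} : Set (Fin 3)) :=
        ext3 (by simp) (by simp) (by simp)
      have c2 : ({(2:Fin 3)} : Set (Fin 3))ᶜ = ({0,1} : Set (Fin 3)) :=
        ext3 (by simp) (by simp) (by simp)
      obtain ⟨e, hev, heu, hew, hiff⟩ := equiv_three G v u w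
        (distinct_of G hv hu (ne_sets 0 (by simp) (by simp)))
        (distinct_of G hv hw (ne_sets 0 (by simp) (by simp)))
        (distinct_of G hu hw (ne_sets 1 (by simp) (by simp)))
        hall ⟨hsv.2, hsv.1⟩ hsw hnvw
      refine Or.inr (Or.inr (Or.inl ⟨e, ?_, hiff⟩))
      intro x
      rcases hall x with h | h | h <;> rw [h]
      · rw [hev, c0]; exact hv
      · rw [heu, c1]; exact hu
      · rw [hew, c2]; exact hw
    · -- τ w = {1,2} : contradiction
      exact absurd (show (2:Fin 3) ∈ G.τ w by simp [hw]) h2w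
end Core2

/-- Classification of `A₃`-molecules: every `A₃`-molecule is isomorphic to one of:
a single vertex with τ-invariant `∅` or `{1,2,3}`; the three-vertex path with
τ-invariants `{1},{2},{3}`; the three-vertex path with τ-invariants
`{2,3},{1,3},{1,2}`; or the two-vertex edge with τ-invariants `{2}`, `{1,3}`.
(Labels are shifted down by one, to `Fin 3`.) -/
theorem stmt_3 {V : Type} [Fintype V] [Nonempty V] (G : MolGraph V (Fin 3) bondA3)
    (hconn : ∀ u v : V, Relation.ReflTransGen G.toSLG.Simple u v) :
    -- single vertex with τ-invariant ∅ or {1,2,3}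
    ((∀ u v : V, u = v) ∧ ((∀ v, G.τ v = ∅) ∨ (∀ v, G.τ v = Set.univ))) ∨
    -- the path with τ-invariants {1},{2},{3}
    (∃ e : V ≃ Fin 3, (∀ v, G.τ v = {e v}) ∧
      (∀ u v, G.toSLG.Simple u v ↔ bondA3 (e u) (e v))) ∨
    -- the path with τ-invariants {2,3},{1,3},{1,2}
    (∃ e : V ≃ Fin 3, (∀ v, G.τ v = {e v}ᶜ) ∧
      (∀ u v, G.toSLG.Simple u v ↔ bondA3 (e u) (e v))) ∨
    -- the edge with τ-invariants {2}, {1,3}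
    (∃ e : V ≃ Fin 2, G.τ (e.symm 0) = {1} ∧ G.τ (e.symm 1) = ({0, 2} : Set (Fin 3)) ∧
      (∀ u v, G.toSLG.Simple u v ↔ e u ≠ e v)) := by
  show Concl G
  obtain ⟨u⟩ := ‹Nonempty V›
  by_cases h0 : (0:Fin 3) ∈ G.τ u <;> by_cases h1 : (1:Fin 3) ∈ G.τ u <;>
    by_cases h2 : (2:Fin 3) ∈ G.τ u
  · -- τ u = univ
    have hu : G.τ u = Set.univ := ext3 (by simp [h0]) (by simp [h1]) (by simp [h2])
    have hns : ∀ w, ¬ G.toSLG.Simple u w :=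
      fun w hw => hw.2 (G.subset_zero w u (by rw [hu]; exact Set.subset_univ _))
    have hall : ∀ v, v = u := by
      intro v
      rcases (hconn u v).cases_head with h | ⟨c, hc, -⟩
      · exact h.symm
      · exact absurd hc (hns c)
    exact Or.inl ⟨fun a b => (hall a).trans (hall b).symm,
      Or.inr (fun v => by rw [hall v]; exact hu)⟩
  · -- τ u = {0,1}
    have hu : G.τ u = ({0,1} : Set (Fin 3)) :=
      ext3 (by simp [h0]) (by simp [h1]) (by simp [h2])
    obtain ⟨v, ⟨hsv, -⟩, -⟩ := G.BR 1 2 (by decide) u (by simp [hu]) (by simp [hu])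
    exact from_02 G hconn v (nbr01 G hu hsv)
  · -- τ u = {0,2}
    have hu : G.τ u = ({0,2} : Set (Fin 3)) :=
      ext3 (by simp [h0]) (by simp [h1]) (by simp [h2])
    exact from_02 G hconn u hu
  · -- τ u = {0}
    have hu : G.τ u = ({0} : Set (Fin 3)) :=
      ext3 (by simp [h0]) (by simp [h1]) (by simp [h2])
    obtain ⟨v, ⟨hsv, -⟩, -⟩ := G.BR 0 1 (by decide) u (by simp [hu]) (by simp [hu])
    exact from_one G hconn v (nbr0 G hu hsv)
  · -- τ u = {1,2}
    have hu : G.τ u = ({1,2} : Set (Fin 3)) :=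
      ext3 (by simp [h0]) (by simp [h1]) (by simp [h2])
    obtain ⟨v, ⟨hsv, -⟩, -⟩ := G.BR 1 0 (by decide) u (by simp [hu]) (by simp [hu])
    exact from_02 G hconn v (nbr12 G hu hsv)
  · -- τ u = {1}
    have hu : G.τ u = ({1} : Set (Fin 3)) :=
      ext3 (by simp [h0]) (by simp [h1]) (by simp [h2])
    exact from_one G hconn u hu
  · -- τ u = {2}
    have hu : G.τ u = ({2} : Set (Fin 3)) :=
      ext3 (by simp [h0]) (by simp [h1]) (by simp [h2])
    obtain ⟨v, ⟨hsv, -⟩, -⟩ := G.BR 2 1 (by decide) u (by simp [hu]) (by simp [hu])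
    exact from_one G hconn v (nbr2 G hu hsv)
  · -- τ u = ∅
    have hu : G.τ u = (∅ : Set (Fin 3)) :=
      ext3 (by simp [h0]) (by simp [h1]) (by simp [h2])
    have hns : ∀ w, ¬ G.toSLG.Simple u w :=
      fun w hw => hw.1 (G.subset_zero u w (by rw [hu]; exact Set.empty_subset _))
    have hall : ∀ v, v = u := by
      intro v
      rcases (hconn u v).cases_head with h | ⟨c, hc, -⟩
      · exact h.symm
      · exact absurd hc (hns c)
    exact Or.inl ⟨fun a b => (hall a).trans (hall b).symm,
      Or.inl (fun v => by rw [hall v]; exact hu)⟩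
end

section
/- (Arc transport, first form) Let M be a W-molecular graph for a simply-laced Coxeter system, and suppose (x,y) and (x',y') are simple edges both activating the same bond (i,j), with i ∈ τ(x) ∩ τ(x') and j ∈ τ(y) ∩ τ(y'). Suppose there exists k ∈ S with k ∈ τ(x) ∩ τ(y) and k ∉ τ(x') ∪ τ(y'). Then m(x, x') = m(y, y'). -/
open scoped Classical

/-!
Assume first that `k` is not bonded to `j`. The local polygon rule LPR2 for the pair
`(x, y')` and the labels `i, k` equates two weighted counts of alternating paths
`x → w → y'`. Each count has a single nonzero term: for type `(i, k)` the middle vertex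
must be `x'`, and for type `(k, i)` it must be `y`: any other middle vertex gives either
an edge forcing the bond `(k, j)` by the compatibility rule, or a second simple edge
activating the bond `(i, j)` at `y'` resp. `x`, against the uniqueness in the bonding rule. The two counts are therefore `m x x'` and
`m y y'`. If `k` is bonded to `j`, then it is not bonded to `i` because the Coxeter graph
is triangle-free, and the same argument applies with the roles of `i` and `j` swapped.
-/

namespace SLG

variable {V S : Type} (G : SLG V S)

lemma Simple.symm {G : SLG V S} {u v : V} (h : G.Simple u v) : G.Simple v u :=
  ⟨h.2, h.1⟩

lemma simple_of_ne_zero {u v : V} {a b : S} (h : G.m u v ≠ 0)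
    (hau : a ∈ G.τ u) (hav : a ∉ G.τ v) (hbv : b ∈ G.τ v) (hbu : b ∉ G.τ u) :
    G.Simple u v := by
  have huv : ¬ G.τ u ⊆ G.τ v := fun hs => hav (hs hau)
  have hvu : ¬ G.τ v ⊆ G.τ u := fun hs => hbu (hs hbv)
  exact ⟨h, G.incomp_symm u v huv hvu ▸ h⟩

lemma Activates.not_mem_of_mem_left {G : SLG V S} {u v : V} {i j : S}
    (h : G.Activates u v i j) (hi : i ∈ G.τ u) : i ∉ G.τ v ∧ j ∉ G.τ u := by
  rcases h with ⟨_, hiv, _, hju⟩ | ⟨_, hiu, _, _⟩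
  · exact ⟨hiv, hju⟩
  · exact absurd hi hiu

lemma N2_eq_of_unique [Fintype V] {a b : S} {u v : V} (w₀ : V)
    (haw₀ : a ∈ G.τ w₀) (hbw₀ : b ∉ G.τ w₀)
    (huniq : ∀ w, a ∈ G.τ w → b ∉ G.τ w → G.m u w ≠ 0 → G.m w v ≠ 0 → w = w₀) :
    G.N2 a b u v = G.m u w₀ * G.m w₀ v := by
  unfold N2
  rw [Finset.sum_eq_single w₀ _ (fun h => absurd (Finset.mem_univ w₀) h),
    if_pos ⟨haw₀, hbw₀⟩]
  intro w _ hw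
  split_ifs with hab
  · by_contra hne
    obtain ⟨huw, hwv⟩ := mul_ne_zero_iff.mp hne
    exact hw (huniq w hab.1 hab.2 huw hwv)
  · rfl

end SLG

namespace MolGraph

variable {V S : Type} [Fintype V] {bond : S → S → Prop} (G : MolGraph V S bond)

lemma eq_of_simple_activating {i j : S} (hb : bond i j) {u v w : V}
    (hiu : i ∈ G.τ u) (hju : j ∉ G.τ u)
    (hv : G.Simple u v) (hiv : i ∉ G.τ v) (hjv : j ∈ G.τ v)
    (hw : G.Simple u w) (hiw : i ∉ G.τ w) (hjw : j ∈ G.τ w) : v = w := by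
  obtain ⟨_, _, huniq⟩ := G.BR i j hb u hiu hju
  exact (huniq v ⟨hv, Or.inl ⟨hiu, hiv, hjv, hju⟩⟩).trans
    (huniq w ⟨hw, Or.inl ⟨hiu, hiw, hjw, hju⟩⟩).symm

lemma m_eq_of_not_bond {i j k : S} (hsymm : ∀ a b, bond a b → bond b a) (hb : bond i j)
    (hkj : ¬ bond k j) {x y x' y' : V}
    (hxy : G.Simple x y) (hxy' : G.Simple x' y')
    (hix : i ∈ G.τ x) (hiy : i ∉ G.τ y) (hjy : j ∈ G.τ y) (hjx : j ∉ G.τ x)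
    (hix' : i ∈ G.τ x') (hiy' : i ∉ G.τ y') (hjy' : j ∈ G.τ y') (hjx' : j ∉ G.τ x')
    (hkx : k ∈ G.τ x) (hky : k ∈ G.τ y) (hkx' : k ∉ G.τ x') (hky' : k ∉ G.τ y') :
    G.m x x' = G.m y y' := by
  have hpaths_ik : G.N2 i k x y' = G.m x x' := by
    rw [G.N2_eq_of_unique x' hix' hkx', G.SR x' y' hxy', mul_one]
    intro w hiw hkw hxw hwy'
    by_cases hjw : j ∈ G.τ w
    · exact absurd (G.CR x w hxw k hkx hkw j hjw hjx) hkj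
    · exact G.eq_of_simple_activating (hsymm i j hb) hjy' hiy'
        (G.simple_of_ne_zero hwy' hiw hiy' hjy' hjw).symm hjw hiw hxy'.symm hjx' hix'
  have hpaths_ki : G.N2 k i x y' = G.m y y' := by
    rw [G.N2_eq_of_unique y hky hiy, G.SR x y hxy, one_mul]
    intro w hkw hiw hxw hwy'
    by_cases hjw : j ∈ G.τ w
    · exact G.eq_of_simple_activating hb hix hjx
        (G.simple_of_ne_zero hxw hix hiw hjw hjx) hiw hjw hxy hiy hjy
    · exact absurd (G.CR w y' hwy' k hkw hky' j hjy' hjw) hkj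
  rw [← hpaths_ik, ← hpaths_ki, G.LPR2 i k x y' hix hkx hiy' hky' ⟨j, hjy', hjx⟩]

end MolGraph

theorem stmt_5_general {V S : Type} [Fintype V] {bond : S → S → Prop}
    (hsymm : ∀ a b, bond a b → bond b a)
    (htri : ∀ a b c, bond a b → bond b c → ¬ bond a c)
    (G : MolGraph V S bond) (i j k : S) (x y x' y' : V)
    (hb : bond i j)
    (hxy : G.toSLG.Simple x y) (hxy' : G.toSLG.Simple x' y')
    (ha : G.toSLG.Activates x y i j) (ha' : G.toSLG.Activates x' y' i j)
    (hix : i ∈ G.τ x) (hix' : i ∈ G.τ x') (hjy : j ∈ G.τ y) (hjy' : j ∈ G.τ y')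
    (hkx : k ∈ G.τ x) (hky : k ∈ G.τ y) (hkx' : k ∉ G.τ x') (hky' : k ∉ G.τ y') :
    G.m x x' = G.m y y' := by
  obtain ⟨hiy, hjx⟩ := ha.not_mem_of_mem_left hix
  obtain ⟨hiy', hjx'⟩ := ha'.not_mem_of_mem_left hix'
  by_cases hkj : bond k j
  · have hki : ¬ bond k i := htri k j i hkj (hsymm i j hb)
    exact (G.m_eq_of_not_bond hsymm (hsymm i j hb) hki hxy.symm hxy'.symm
      hjy hjx hix hiy hjy' hjx' hix' hiy' hky hkx hky' hkx').symm
  · exact G.m_eq_of_not_bond hsymm hb hkj hxy hxy'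
      hix hiy hjy hjx hix' hiy' hjy' hjx' hkx hky hkx' hky'

/-- Arc transport (Proposition at1): if simple edges `(x,y)` and `(x',y')` both
activate the bond `(i,j)`, with `i ∈ τ x ∩ τ x'`, `j ∈ τ y ∩ τ y'`, and there is a
`k` with `k ∈ τ x ∩ τ y` and `k ∉ τ x' ∪ τ y'`, then `m x x' = m y y'`.  The Coxeter
graph is simply laced: `bond` is symmetric, irreflexive and triangle-free. -/
theorem stmt_5 {V S : Type} [Fintype V] {bond : S → S → Prop}
    (hsymm : ∀ a b, bond a b → bond b a) (hirr : ∀ a, ¬ bond a a)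
    (htri : ∀ a b c, bond a b → bond b c → ¬ bond a c)
    (G : MolGraph V S bond) (i j k : S) (x y x' y' : V)
    (hb : bond i j)
    (hxy : G.toSLG.Simple x y) (hxy' : G.toSLG.Simple x' y')
    (ha : G.toSLG.Activates x y i j) (ha' : G.toSLG.Activates x' y' i j)
    (hix : i ∈ G.τ x) (hix' : i ∈ G.τ x') (hjy : j ∈ G.τ y) (hjy' : j ∈ G.τ y')
    (hkx : k ∈ G.τ x) (hky : k ∈ G.τ y) (hkx' : k ∉ G.τ x') (hky' : k ∉ G.τ y') :
    G.m x x' = G.m y y' :=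
  stmt_5_general hsymm htri G i j k x y x' y' hb hxy hxy' ha ha' hix hix' hjy hjy' hkx hky hkx' hky'
end

section
/- The W_J-restriction of a W-molecular graph is a W_J-molecular graph. That is, if (V, m, τ) is a molecular graph for the Coxeter system (W,S) and J ⊆ S, then (V, m', τ') with τ'(v) = τ(v) ∩ J and m'(u,v) = 0 if τ'(u) ⊆ τ'(v), m'(u,v) = m(u,v) otherwise, satisfies the admissibility conditions and the rules SR, CR, BR for the Coxeter system (W_J, J). -/
/-!
Intersecting τ-invariants with `J` can only make them comparable, so the restriction only
deletes edges and keeps the weights of the surviving ones; this gives admissibility, SR and CR.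
For a bond `(i, j)` inside `J`, whether an edge activates it does not change under the
restriction, and an activating edge joins vertices with incomparable τ-invariants, so it
survives: the edges of the restriction activating `(i, j)` are exactly those of the original
graph, and BR is inherited.
-/

open scoped Classical

namespace SLG

variable {V S : Type} (G : SLG V S) (J : Set S)

noncomputable def restrict : SLG V S where
  τ v := G.τ v ∩ J
  m u v := if G.τ u ∩ J ⊆ G.τ v ∩ J then 0 else G.m u v
  bipartite := by
    obtain ⟨c, hc⟩ := G.bipartite
    refine ⟨c, fun u v h => hc u v fun h₀ => h ?_⟩
    simp only [h₀, ite_self]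
  subset_zero _ _ h := if_pos h
  incomp_symm u v huv hvu := by
    rw [if_neg huv, if_neg hvu]
    exact G.incomp_symm u v (fun h => huv (Set.inter_subset_inter_left J h))
      (fun h => hvu (Set.inter_subset_inter_left J h))

variable {G J} {u v : V} {i j : S}

theorem restrict_m_of_not_subset (h : ¬ G.τ u ∩ J ⊆ G.τ v ∩ J) :
    (G.restrict J).m u v = G.m u v :=
  if_neg h

theorem restrict_m_of_ne_zero (h : (G.restrict J).m u v ≠ 0) :
    (G.restrict J).m u v = G.m u v :=
  restrict_m_of_not_subset fun hsub => h ((G.restrict J).subset_zero u v hsub)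

theorem m_ne_zero_of_restrict (h : (G.restrict J).m u v ≠ 0) : G.m u v ≠ 0 :=
  restrict_m_of_ne_zero h ▸ h

theorem Simple.of_restrict (h : (G.restrict J).Simple u v) : G.Simple u v :=
  ⟨m_ne_zero_of_restrict h.1, m_ne_zero_of_restrict h.2⟩

theorem Activates.symm (h : G.Activates u v i j) : G.Activates v u i j :=
  Or.symm h

theorem Activates.not_subset (h : G.Activates u v i j) : ¬ G.τ u ⊆ G.τ v := by
  rcases h with ⟨hiu, hiv, -⟩ | ⟨-, -, hju, hjv⟩
  exacts [fun hsub => hiv (hsub hiu), fun hsub => hjv (hsub hju)]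

theorem restrict_activates_iff (hi : i ∈ J) (hj : j ∈ J) :
    (G.restrict J).Activates u v i j ↔ G.Activates u v i j := by
  simp only [Activates, restrict, Set.mem_inter_iff, hi, hj, and_true]

theorem restrict_simple_iff_of_activates (h : (G.restrict J).Activates u v i j) :
    (G.restrict J).Simple u v ↔ G.Simple u v := by
  rw [Simple, Simple, restrict_m_of_not_subset h.not_subset,
    restrict_m_of_not_subset h.symm.not_subset]

end SLG

namespace MolGraph

variable {V S : Type} [Fintype V] {bond : S → S → Prop} (G : MolGraph V S bond) (J : Set S)

theorem restrict_SR (u v : V) (h : (G.toSLG.restrict J).Simple u v) :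
    (G.toSLG.restrict J).m u v = 1 :=
  (SLG.restrict_m_of_ne_zero h.1).trans (G.SR u v h.of_restrict)

theorem restrict_CR (u v : V) (h : (G.toSLG.restrict J).m u v ≠ 0) (i : S)
    (hiu : i ∈ G.τ u ∩ J) (hiv : i ∉ G.τ v ∩ J) (j : S) (hjv : j ∈ G.τ v ∩ J)
    (hju : j ∉ G.τ u ∩ J) : bond i j ∧ i ∈ J ∧ j ∈ J :=
  ⟨G.CR u v (SLG.m_ne_zero_of_restrict h) i hiu.1 (fun hi => hiv ⟨hi, hiu.2⟩) j hjv.1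
    (fun hj => hju ⟨hj, hjv.2⟩), hiu.2, hjv.2⟩

theorem restrict_BR (i j : S) (hij : bond i j ∧ i ∈ J ∧ j ∈ J) (u : V)
    (hiu : i ∈ G.τ u ∩ J) (hju : j ∉ G.τ u ∩ J) :
    ∃! v, (G.toSLG.restrict J).Simple u v ∧ (G.toSLG.restrict J).Activates u v i j := by
  obtain ⟨hbond, hi, hj⟩ := hij
  have hsame : ∀ v, (G.toSLG.restrict J).Simple u v ∧ (G.toSLG.restrict J).Activates u v i j ↔
      G.Simple u v ∧ G.Activates u v i j := fun v =>
    ⟨fun ⟨hs, ha⟩ => ⟨(SLG.restrict_simple_iff_of_activates ha).1 hs,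
        (SLG.restrict_activates_iff hi hj).1 ha⟩,
      fun ⟨hs, ha⟩ =>
        have ha' := (SLG.restrict_activates_iff hi hj).2 ha
        ⟨(SLG.restrict_simple_iff_of_activates ha').2 hs, ha'⟩⟩
  rw [existsUnique_congr hsame]
  exact G.BR i j hbond u hiu.1 fun hj' => hju ⟨hj', hj⟩

end MolGraph

theorem stmt_6_general {V S : Type} [Fintype V] {bond : S → S → Prop}
    (G : MolGraph V S bond) (J : Set S)
    (τ' : V → Set S) (hτ' : ∀ v, τ' v = G.τ v ∩ J)
    (m' : V → V → ℕ) (hm' : ∀ u v, m' u v = if τ' u ⊆ τ' v then 0 else G.m u v)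
    (bond' : S → S → Prop) (hbond' : ∀ i j, bond' i j ↔ bond i j ∧ i ∈ J ∧ j ∈ J) :
    -- admissibility: bipartite, subset rule, symmetry for incomparable τ-invariants
    (∃ c : V → Bool, ∀ u v, m' u v ≠ 0 → c u ≠ c v) ∧
    (∀ u v, τ' u ⊆ τ' v → m' u v = 0) ∧
    (∀ u v, ¬ τ' u ⊆ τ' v → ¬ τ' v ⊆ τ' u → m' u v = m' v u) ∧
    -- SR
    (∀ u v, m' u v ≠ 0 → m' v u ≠ 0 → m' u v = 1) ∧
    -- CR
    (∀ u v, m' u v ≠ 0 → ∀ i, i ∈ τ' u → i ∉ τ' v → ∀ j, j ∈ τ' v → j ∉ τ' u → bond' i j) ∧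
    -- BR
    (∀ i j, bond' i j → ∀ u, i ∈ τ' u → j ∉ τ' u →
      ∃! v, (m' u v ≠ 0 ∧ m' v u ≠ 0) ∧
        ((i ∈ τ' u ∧ i ∉ τ' v ∧ j ∈ τ' v ∧ j ∉ τ' u) ∨
         (i ∈ τ' v ∧ i ∉ τ' u ∧ j ∈ τ' u ∧ j ∉ τ' v))) := by
  obtain rfl : τ' = fun v => G.τ v ∩ J := funext hτ'
  obtain rfl : m' = (G.toSLG.restrict J).m := funext fun u => funext (hm' u)
  obtain rfl : bond' = fun i j => bond i j ∧ i ∈ J ∧ j ∈ J :=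
    funext fun i => funext fun j => propext (hbond' i j)
  exact ⟨(G.toSLG.restrict J).bipartite, (G.toSLG.restrict J).subset_zero,
    (G.toSLG.restrict J).incomp_symm, fun u v h₁ h₂ => G.restrict_SR J u v ⟨h₁, h₂⟩,
    G.restrict_CR J, G.restrict_BR J⟩

/-- The `W_J`-restriction of a `W`-molecular graph is a `W_J`-molecular graph:
with `τ' v = τ v ∩ J` and `m'` the restricted weights, the restriction satisfies
admissibility and the rules SR, CR, BR for the parabolic subsystem `(W_J, J)`
(whose bonds are the bonds of `S` with both ends in `J`). -/
theorem stmt_6 {V S : Type} [Fintype V] {bond : S → S → Prop}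
    (hsymm : ∀ a b, bond a b → bond b a) (hirr : ∀ a, ¬ bond a a)
    (G : MolGraph V S bond) (J : Set S)
    (τ' : V → Set S) (hτ' : ∀ v, τ' v = G.τ v ∩ J)
    (m' : V → V → ℕ) (hm' : ∀ u v, m' u v = if τ' u ⊆ τ' v then 0 else G.m u v)
    (bond' : S → S → Prop) (hbond' : ∀ i j, bond' i j ↔ bond i j ∧ i ∈ J ∧ j ∈ J) :
    -- admissibility: bipartite, subset rule, symmetry for incomparable τ-invariants
    (∃ c : V → Bool, ∀ u v, m' u v ≠ 0 → c u ≠ c v) ∧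
    (∀ u v, τ' u ⊆ τ' v → m' u v = 0) ∧
    (∀ u v, ¬ τ' u ⊆ τ' v → ¬ τ' v ⊆ τ' u → m' u v = m' v u) ∧
    -- SR
    (∀ u v, m' u v ≠ 0 → m' v u ≠ 0 → m' u v = 1) ∧
    -- CR
    (∀ u v, m' u v ≠ 0 → ∀ i, i ∈ τ' u → i ∉ τ' v → ∀ j, j ∈ τ' v → j ∉ τ' u → bond' i j) ∧
    -- BR
    (∀ i j, bond' i j → ∀ u, i ∈ τ' u → j ∉ τ' u →
      ∃! v, (m' u v ≠ 0 ∧ m' v u ≠ 0) ∧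
        ((i ∈ τ' u ∧ i ∉ τ' v ∧ j ∈ τ' v ∧ j ∉ τ' u) ∨
         (i ∈ τ' v ∧ i ∉ τ' u ∧ j ∈ τ' u ∧ j ∉ τ' v))) :=
  stmt_6_general G J τ' hτ' m' hm' bond' hbond'
end

section
/- Let T be a standard Young tableau and let T' be obtained from T by a dual Knuth move exchanging i and i+1 (valid because i−1 or i+2 lies on a diagonal strictly between the diagonals of i and i+1). Then T' is again a standard Young tableau of the same shape. -/
open scoped Classical

/-- The content (diagonal) of a cell `(r, c)` is `c - r` (English convention,
NW–SE diagonals). -/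
def cellContent (c : ℕ × ℕ) : ℤ := (c.2 : ℤ) - (c.1 : ℤ)

/-- A standard Young tableau of shape `μ`: a filling of the cells of `μ` with the
entries `1, …, μ.card`, bijectively, strictly increasing along rows and columns.
(Cells outside the diagram carry the junk value `0`.) -/
structure SYT (μ : YoungDiagram) where
  entry : ℕ × ℕ → ℕ
  bijOn : Set.BijOn entry (μ : Set (ℕ × ℕ)) (Set.Icc 1 μ.card)
  zero_of_not_mem : ∀ c, c ∉ μ → entry c = 0
  row_strict : ∀ a b : ℕ × ℕ, a ∈ μ → b ∈ μ → a.1 = b.1 → a.2 < b.2 → entry a < entry b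
  col_strict : ∀ a b : ℕ × ℕ, a ∈ μ → b ∈ μ → a.2 = b.2 → a.1 < b.1 → entry a < entry b

/-- `i` is a descent of `T`: `i` is located in a (strictly) higher row than `i+1`. -/
def SYT.Desc {μ : YoungDiagram} (T : SYT μ) (i : ℕ) : Prop :=
  ∃ a b : ℕ × ℕ, a ∈ μ ∧ b ∈ μ ∧ T.entry a = i ∧ T.entry b = i + 1 ∧ a.1 < b.1

/-- `U` is obtained from `T` by the dual Knuth move exchanging `j` and `j+1`:
the exchange is permitted because some cell with entry `j-1` or `j+2` lies on a
diagonal strictly between the diagonals of `j` and `j+1`. -/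
def SYT.DKSwap {μ : YoungDiagram} (T U : SYT μ) (j : ℕ) : Prop :=
  1 ≤ j ∧ (∀ c : ℕ × ℕ, U.entry c = Equiv.swap j (j + 1) (T.entry c)) ∧
  ∃ a b w : ℕ × ℕ, a ∈ μ ∧ b ∈ μ ∧ w ∈ μ ∧
    T.entry a = j ∧ T.entry b = j + 1 ∧
    (T.entry w + 1 = j ∨ T.entry w = j + 2) ∧
    cellContent w ∈
      Set.Ioo (min (cellContent a) (cellContent b)) (max (cellContent a) (cellContent b))

/-- `T` and `U` are related by a dual Knuth move. -/
def SYT.DKEdge {μ : YoungDiagram} (T U : SYT μ) : Prop := ∃ j, T.DKSwap U j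

/-- The edge `(T,U)` activates the bond `a_i`: exactly one of the descent sets of
`T`, `U` contains `i`, and exactly the other contains `i+1`. -/
def SYT.Activ {μ : YoungDiagram} (T U : SYT μ) (i : ℕ) : Prop :=
  (T.Desc i ∧ ¬ U.Desc i ∧ U.Desc (i + 1) ∧ ¬ T.Desc (i + 1)) ∨
  (U.Desc i ∧ ¬ T.Desc i ∧ T.Desc (i + 1) ∧ ¬ U.Desc (i + 1))

/-!
Two consecutive entries `k`, `k + 1` of a standard Young tableau that share a row (or a
column) must be adjacent in it, since any cell between them would carry an entry strictly
between `k` and `k + 1`; so their contents differ by exactly one. A cell whose content lies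
strictly between those of `j` and `j + 1` forces a content gap of at least two, hence `j` and
`j + 1` lie in different rows and different columns. Exchanging them then keeps rows and
columns increasing, because the exchange preserves the order of every other pair of entries.
-/

lemma Equiv.swap_self_add_one_lt_swap {j m n : ℕ} (hmn : m < n) (hne : ¬(m = j ∧ n = j + 1)) :
    Equiv.swap j (j + 1) m < Equiv.swap j (j + 1) n := by
  simp only [Equiv.swap_apply_def]
  split_ifs <;> omega

namespace SYT

variable {μ : YoungDiagram} (T : SYT μ)

lemma eq_of_entry_eq {a b : ℕ × ℕ} (ha : a ∈ μ) (hb : b ∈ μ) (h : T.entry a = T.entry b) :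
    a = b :=
  T.bijOn.injOn ha hb h

lemma cellContent_eq_add_one_of_fst_eq {a b : ℕ × ℕ} {k : ℕ} (ha : a ∈ μ) (hb : b ∈ μ)
    (hea : T.entry a = k) (heb : T.entry b = k + 1) (hrow : a.1 = b.1) :
    cellContent b = cellContent a + 1 := by
  have hlt : a.2 < b.2 := by
    rcases lt_trichotomy a.2 b.2 with h | h | h
    · exact h
    · obtain rfl : a = b := Prod.ext hrow h
      omega
    · have := T.row_strict b a hb ha hrow.symm h
      omega
  have hadj : b.2 = a.2 + 1 := by
    by_contra hne
    have hm : (a.1, a.2 + 1) ∈ μ := μ.up_left_mem hrow.le (by omega) hb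
    have e1 := T.row_strict a _ ha hm rfl (Nat.lt_succ_self _)
    have e2 := T.row_strict _ b hm hb hrow (by dsimp only; omega)
    omega
  simp only [cellContent, hrow, hadj]
  push_cast
  ring

lemma cellContent_eq_sub_one_of_snd_eq {a b : ℕ × ℕ} {k : ℕ} (ha : a ∈ μ) (hb : b ∈ μ)
    (hea : T.entry a = k) (heb : T.entry b = k + 1) (hcol : a.2 = b.2) :
    cellContent b = cellContent a - 1 := by
  have hlt : a.1 < b.1 := by
    rcases lt_trichotomy a.1 b.1 with h | h | h
    · exact h
    · obtain rfl : a = b := Prod.ext h hcol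
      omega
    · have := T.col_strict b a hb ha hcol.symm h
      omega
  have hadj : b.1 = a.1 + 1 := by
    by_contra hne
    have hm : (a.1 + 1, a.2) ∈ μ := μ.up_left_mem (by omega) hcol.le hb
    have e1 := T.col_strict a _ ha hm rfl (Nat.lt_succ_self _)
    have e2 := T.col_strict _ b hm hb hcol (by dsimp only; omega)
    omega
  simp only [cellContent, hcol, hadj]
  push_cast
  ring

/-- The bound `1 ≤ j` keeps the junk value `0` outside `μ` fixed. -/
def swap {j : ℕ} (hj : 1 ≤ j) {a b : ℕ × ℕ} (ha : a ∈ μ) (hb : b ∈ μ)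
    (hea : T.entry a = j) (heb : T.entry b = j + 1) (hrow : a.1 ≠ b.1) (hcol : a.2 ≠ b.2) :
    SYT μ where
  entry c := Equiv.swap j (j + 1) (T.entry c)
  bijOn := (Equiv.bijOn_swap (hea ▸ T.bijOn.mapsTo ha) (heb ▸ T.bijOn.mapsTo hb)).comp T.bijOn
  zero_of_not_mem c hc := by
    rw [T.zero_of_not_mem c hc, Equiv.swap_apply_of_ne_of_ne (by omega) (by omega)]
  row_strict c d hc hd hcd hlt := by
    refine Equiv.swap_self_add_one_lt_swap (T.row_strict c d hc hd hcd hlt) ?_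
    rintro ⟨hcj, hdj⟩
    obtain rfl := T.eq_of_entry_eq hc ha (hcj.trans hea.symm)
    obtain rfl := T.eq_of_entry_eq hd hb (hdj.trans heb.symm)
    exact hrow hcd
  col_strict c d hc hd hcd hlt := by
    refine Equiv.swap_self_add_one_lt_swap (T.col_strict c d hc hd hcd hlt) ?_
    rintro ⟨hcj, hdj⟩
    obtain rfl := T.eq_of_entry_eq hc ha (hcj.trans hea.symm)
    obtain rfl := T.eq_of_entry_eq hd hb (hdj.trans heb.symm)
    exact hcol hcd

end SYT

theorem stmt_8_general {μ : YoungDiagram} (T : SYT μ) (j : ℕ) (hj : 1 ≤ j)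
    (a b w : ℕ × ℕ) (ha : a ∈ μ) (hb : b ∈ μ)
    (hea : T.entry a = j) (heb : T.entry b = j + 1)
    (hbetween : cellContent w ∈
      Set.Ioo (min (cellContent a) (cellContent b)) (max (cellContent a) (cellContent b))) :
    ∃ U : SYT μ, ∀ c : ℕ × ℕ, U.entry c = Equiv.swap j (j + 1) (T.entry c) := by
  obtain ⟨hmin, hmax⟩ := hbetween
  have hrow : a.1 ≠ b.1 := fun h => by
    have := T.cellContent_eq_add_one_of_fst_eq ha hb hea heb h
    omega
  have hcol : a.2 ≠ b.2 := fun h => by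
    have := T.cellContent_eq_sub_one_of_snd_eq ha hb hea heb h
    omega
  exact ⟨T.swap hj ha hb hea heb hrow hcol, fun _ => rfl⟩

/-- A dual Knuth move produces a standard Young tableau: if in `T` the entries `j`
and `j+1` may be exchanged (because a cell with entry `j-1` or `j+2` lies on a
diagonal strictly between theirs), then the exchanged filling is again a standard
Young tableau of the same shape. -/
theorem stmt_8 {μ : YoungDiagram} (T : SYT μ) (j : ℕ) (hj : 1 ≤ j)
    (a b w : ℕ × ℕ) (ha : a ∈ μ) (hb : b ∈ μ) (hw : w ∈ μ)
    (hea : T.entry a = j) (heb : T.entry b = j + 1)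
    (hew : T.entry w + 1 = j ∨ T.entry w = j + 2)
    (hbetween : cellContent w ∈
      Set.Ioo (min (cellContent a) (cellContent b)) (max (cellContent a) (cellContent b))) :
    ∃ U : SYT μ, ∀ c : ℕ × ℕ, U.entry c = Equiv.swap j (j + 1) (T.entry c) :=
  stmt_8_general T j hj a b w ha hb hea heb hbetween
end

section
/- Let T and U be standard Young tableaux of shape λ related by a dual Knuth move exchanging i and i+1. Then the left-descent sets satisfy: i ∈ τ(T) iff i ∉ τ(U), and for every h with h < i−1 or h > i+1, h ∈ τ(T) iff h ∈ τ(U). (The dual Knuth move exchanging i and i+1 can only change membership of i−1, i, i+1 in the descent set.) -/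
/-!
Two consecutive entries `i`, `i + 1` in the same row of a standard tableau sit in adjacent
columns, hence on adjacent diagonals. So the diagonal condition of a dual Knuth move forces
`i` and `i + 1` into different rows, and exchanging them turns the descent `i` into an ascent
or vice versa. The cells of all other entries are unchanged, so a descent `h` with
`{h, h + 1}` disjoint from `{i, i + 1}` is unaffected.
-/

open scoped Classical

namespace SYT

variable {μ : YoungDiagram}

theorem snd_eq_succ_of_fst_eq (T : SYT μ) {a b : ℕ × ℕ} (ha : a ∈ μ) (hb : b ∈ μ)
    (hab : T.entry b = T.entry a + 1) (hrow : a.1 = b.1) : b.2 = a.2 + 1 := by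
  have hlt : a.2 < b.2 := by
    rcases lt_trichotomy a.2 b.2 with h | h | h
    · exact h
    · rw [Prod.ext hrow h] at hab; omega
    · have := T.row_strict b a hb ha hrow.symm h; omega
  by_contra hne
  have hc : (a.1, a.2 + 1) ∈ μ := hrow ▸ μ.up_left_mem le_rfl (by omega) hb
  have h₁ := T.row_strict a (a.1, a.2 + 1) ha hc rfl (by simp)
  have h₂ := T.row_strict (a.1, a.2 + 1) b hc hb hrow (by simp only; omega)
  omega

theorem fst_ne_of_cellContent_mem_Ioo (T : SYT μ) {a b w : ℕ × ℕ} (ha : a ∈ μ) (hb : b ∈ μ)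
    (hab : T.entry b = T.entry a + 1)
    (hw : cellContent w ∈ Set.Ioo (min (cellContent a) (cellContent b))
      (max (cellContent a) (cellContent b))) : a.1 ≠ b.1 := by
  intro hrow
  have hcol := T.snd_eq_succ_of_fst_eq ha hb hab hrow
  have hcontent : cellContent b = cellContent a + 1 := by
    simp only [cellContent, hcol, hrow]; push_cast; ring
  rw [hcontent, min_eq_left (by omega), max_eq_right (by omega)] at hw
  obtain ⟨hlo, hhi⟩ := hw
  omega

theorem desc_iff_fst_lt (T : SYT μ) {i : ℕ} {a b : ℕ × ℕ} (ha : a ∈ μ) (hb : b ∈ μ)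
    (hTa : T.entry a = i) (hTb : T.entry b = i + 1) : T.Desc i ↔ a.1 < b.1 := by
  refine ⟨?_, fun hlt => ⟨a, b, ha, hb, hTa, hTb, hlt⟩⟩
  rintro ⟨a', b', ha', hb', hTa', hTb', hlt⟩
  rwa [T.bijOn.injOn ha' ha (hTa'.trans hTa.symm), T.bijOn.injOn hb' hb (hTb'.trans hTb.symm)]
    at hlt

theorem desc_congr {T U : SYT μ} {h : ℕ} (h₀ : ∀ c, U.entry c = h ↔ T.entry c = h)
    (h₁ : ∀ c, U.entry c = h + 1 ↔ T.entry c = h + 1) : T.Desc h ↔ U.Desc h := by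
  simp only [Desc, h₀, h₁]

theorem desc_iff_of_entry_eq_swap {T U : SYT μ} {j h : ℕ}
    (hswap : ∀ c, U.entry c = Equiv.swap j (j + 1) (T.entry c)) (hh : h + 1 < j ∨ j + 1 < h) :
    T.Desc h ↔ U.Desc h := by
  have hfix : ∀ x, x ≠ j → x ≠ j + 1 → ∀ c, U.entry c = x ↔ T.entry c = x := fun x hj hj' c => by
    rw [hswap, Equiv.swap_apply_eq_iff, Equiv.swap_apply_of_ne_of_ne hj hj']
  exact desc_congr (hfix h (by omega) (by omega)) (hfix (h + 1) (by omega) (by omega))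

end SYT

/-- Descent sets under a dual Knuth move exchanging `i` and `i+1`:
`i ∈ τ(T)` iff `i ∉ τ(U)`, and membership of any `h` with `h < i - 1` or
`h > i + 1` is unchanged. -/
theorem stmt_9 {μ : YoungDiagram} (T U : SYT μ) (i : ℕ) (h : T.DKSwap U i) :
    (T.Desc i ↔ ¬ U.Desc i) ∧
    (∀ h', (h' + 1 < i ∨ h' > i + 1) → (T.Desc h' ↔ U.Desc h')) := by
  obtain ⟨-, hswap, a, b, w, ha, hb, -, hTa, hTb, -, hw⟩ := h
  have hrow : a.1 ≠ b.1 := T.fst_ne_of_cellContent_mem_Ioo ha hb (by rw [hTa, hTb]) hw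
  have hUa : U.entry a = i + 1 := by rw [hswap, hTa, Equiv.swap_apply_left]
  have hUb : U.entry b = i := by rw [hswap, hTb, Equiv.swap_apply_right]
  refine ⟨?_, fun h' hh' => SYT.desc_iff_of_entry_eq_swap hswap hh'⟩
  rw [T.desc_iff_fst_lt ha hb hTa hTb, U.desc_iff_fst_lt hb ha hUb hUa]
  omega
end

section
/- The simple part of an A_n-molecule, with edges labeled by the set of bonds they activate, satisfies axioms 1, 2, and 3 of dual equivalence graphs: (1) a vertex w admits an i-neighbor iff there is a unique vertex x joined to w by an a_i-labeled simple edge; (2) traversing an a_i-labeled edge switches i and i+1 in the τ-invariant and does not change membership of any h with h < i−1 or h > i+2; (3) along an a_i-labeled edge (w,x), if i−1 ∈ τ(w) Δ τ(x) then (i−1 ∈ τ(w) iff i+1 ∈ τ(w)), and if i+2 ∈ τ(w) Δ τ(x) then (i+2 ∈ τ(w) iff i ∈ τ(w)). -/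
open scoped Classical

/-- The edge `(u,v)` activates the bond `(i, i+1)` of the type `A` Coxeter graph:
exactly one of `τ u`, `τ v` contains `i`, and exactly the other contains `i+1`. -/
def ActivN {V : Type} (τ : V → Set ℕ) (u v : V) (i : ℕ) : Prop :=
  (i ∈ τ u ∧ i ∉ τ v ∧ i + 1 ∈ τ v ∧ i + 1 ∉ τ u) ∨
  (i ∈ τ v ∧ i ∉ τ u ∧ i + 1 ∈ τ u ∧ i + 1 ∉ τ v)

/-- `N²_{ij}(u,v)`: weighted count of alternating paths of type `(i,j)` of
length 2 from `u` to `v`. -/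
noncomputable def N2 {V : Type} [Fintype V] (m : V → V → ℕ) (τ : V → Set ℕ)
    (i j : ℕ) (u v : V) : ℕ :=
  ∑ w : V, if i ∈ τ w ∧ j ∉ τ w then m u w * m w v else 0

/-- `N³_{ij}(u,v)`: weighted count of alternating paths of type `(i,j)` of
length 3 from `u` to `v`. -/
noncomputable def N3 {V : Type} [Fintype V] (m : V → V → ℕ) (τ : V → Set ℕ)
    (i j : ℕ) (u v : V) : ℕ :=
  ∑ w₁ : V, ∑ w₂ : V,
    if (i ∈ τ w₁ ∧ j ∉ τ w₁) ∧ (j ∈ τ w₂ ∧ i ∉ τ w₂) then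
      m u w₁ * m w₁ w₂ * m w₂ v else 0

/-- An `Aₙ`-molecule: an admissible `S`-labeled graph for `S = {1, …, n}` with
bonds `(i, i+1)`, connected by simple edges, satisfying Stembridge's simplicity,
compatibility, bonding and local polygon rules. -/
structure AnMol (n : ℕ) (V : Type) [Fintype V] where
  m : V → V → ℕ
  τ : V → Set ℕ
  τ_sub : ∀ v, τ v ⊆ Set.Icc 1 n
  bipartite : ∃ c : V → Bool, ∀ u v, m u v ≠ 0 → c u ≠ c v
  subset_zero : ∀ u v, τ u ⊆ τ v → m u v = 0
  incomp_symm : ∀ u v, ¬ τ u ⊆ τ v → ¬ τ v ⊆ τ u → m u v = m v u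
  SR : ∀ u v, m u v ≠ 0 → m v u ≠ 0 → m u v = 1
  CR : ∀ u v, m u v ≠ 0 → ∀ i, i ∈ τ u → i ∉ τ v → ∀ j, j ∈ τ v → j ∉ τ u →
    (i + 1 = j ∨ j + 1 = i)
  BR : ∀ i u, 1 ≤ i → i + 1 ≤ n → Xor' (i ∈ τ u) (i + 1 ∈ τ u) →
    ∃! v, (m u v ≠ 0 ∧ m v u ≠ 0) ∧ ActivN τ u v i
  LPR2 : ∀ i j u v, i ∈ τ u → j ∈ τ u → i ∉ τ v → j ∉ τ v → (∃ k, k ∈ τ v ∧ k ∉ τ u) →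
    N2 m τ i j u v = N2 m τ j i u v
  LPR3 : ∀ c u v, 1 ≤ c → c + 3 ≤ n →
    c + 1 ∈ τ u → c + 2 ∈ τ u → c + 1 ∉ τ v → c + 2 ∉ τ v →
    c ∉ τ u → c + 3 ∉ τ u → c ∈ τ v → c + 3 ∈ τ v →
    N3 m τ (c + 1) (c + 2) u v = N3 m τ (c + 2) (c + 1) u v
  connected : ∀ u v, Relation.ReflTransGen (fun a b => m a b ≠ 0 ∧ m b a ≠ 0) u v

/-- A simple edge of a molecule. -/
def AnMol.Simple {n : ℕ} {V : Type} [Fintype V] (M : AnMol n V) (u v : V) : Prop :=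
  M.m u v ≠ 0 ∧ M.m v u ≠ 0

/-- Rule CR for the τ-invariants at the two ends of an edge, in type `A`. -/
def BondCompatible (A B : Set ℕ) : Prop :=
  ∀ a ∈ A \ B, ∀ b ∈ B \ A, a + 1 = b ∨ b + 1 = a

namespace BondCompatible

variable {A B : Set ℕ} {i : ℕ}

theorem symm (hAB : BondCompatible A B) : BondCompatible B A :=
  fun a ha b hb => (hAB b hb a ha).symm

theorem notMem_symmDiff_of_far (hAB : BondCompatible A B) (hi : i ∈ A \ B)
    (hi1 : i + 1 ∈ B \ A) {h : ℕ} (hh : h + 1 < i ∨ i + 2 < h) : h ∉ symmDiff A B := by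
  rintro (ha | hb)
  · rcases hAB h ha (i + 1) hi1 with e | e <;> omega
  · rcases hAB i hi h hb with e | e <;> omega

theorem mem_iff_of_far (hAB : BondCompatible A B) (hi : i ∈ A \ B) (hi1 : i + 1 ∈ B \ A)
    {h : ℕ} (hh : h + 1 < i ∨ i + 2 < h) : h ∈ A ↔ h ∈ B := by
  have := hAB.notMem_symmDiff_of_far hi hi1 hh
  rw [Set.mem_symmDiff] at this
  tauto

/-- Since `i - 1` is not adjacent to `i + 1 ∈ B \ A`, it can only lie in `B \ A`. -/
theorem sub_one_mem_iff (hAB : BondCompatible A B) (hi1 : i + 1 ∈ B \ A) (h1 : 1 ≤ i)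
    (h : i - 1 ∈ symmDiff A B) : (i - 1 ∈ A ↔ i + 1 ∈ A) ∧ (i - 1 ∈ B ↔ i + 1 ∈ B) := by
  rcases h with ha | hb
  · rcases hAB (i - 1) ha (i + 1) hi1 with e | e <;> omega
  · exact ⟨iff_of_false hb.2 hi1.2, iff_of_true hb.1 hi1.1⟩

/-- Since `i + 2` is not adjacent to `i ∈ A \ B`, it can only lie in `A \ B`. -/
theorem add_two_mem_iff (hAB : BondCompatible A B) (hi : i ∈ A \ B)
    (h : i + 2 ∈ symmDiff A B) : (i + 2 ∈ A ↔ i ∈ A) ∧ (i + 2 ∈ B ↔ i ∈ B) := by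
  rcases h with ha | hb
  · exact ⟨iff_of_true ha.1 hi.1, iff_of_false ha.2 hi.2⟩
  · rcases hAB i hi (i + 2) hb with e | e <;> omega

end BondCompatible

theorem AnMol.bondCompatible {n : ℕ} {V : Type} [Fintype V] (M : AnMol n V) {u v : V}
    (huv : M.m u v ≠ 0) : BondCompatible (M.τ u) (M.τ v) :=
  fun a ha b hb => M.CR u v huv a ha.1 ha.2 b hb.1 hb.2

namespace ActivN

variable {V : Type} {τ : V → Set ℕ} {u v : V} {i : ℕ}

theorem xor_left (h : ActivN τ u v i) : Xor (i ∈ τ u) (i + 1 ∈ τ u) := by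
  rcases h with ⟨hiu, -, -, h1u⟩ | ⟨-, hiu, h1u, -⟩
  · exact Or.inl ⟨hiu, h1u⟩
  · exact Or.inr ⟨h1u, hiu⟩

theorem mem_iff_notMem (h : ActivN τ u v i) : i ∈ τ u ↔ i ∉ τ v := by
  unfold ActivN at h
  tauto

theorem add_one_mem_iff_notMem (h : ActivN τ u v i) : i + 1 ∈ τ u ↔ i + 1 ∉ τ v := by
  unfold ActivN at h
  tauto

end ActivN

/-- The simple part of an `Aₙ`-molecule, with edges labeled by activated bonds,
satisfies axioms 1, 2 and 3 of dual equivalence graphs. -/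
theorem stmt_12 {n : ℕ} {V : Type} [Fintype V] (M : AnMol n V) :
    -- Axiom 1
    (∀ w : V, ∀ i, 1 ≤ i → i + 1 ≤ n →
      (Xor' (i ∈ M.τ w) (i + 1 ∈ M.τ w) ↔
        ∃! x, M.Simple w x ∧ ActivN M.τ w x i)) ∧
    -- Axiom 2
    (∀ w x : V, ∀ i, 1 ≤ i → i + 1 ≤ n → M.Simple w x → ActivN M.τ w x i →
      ((i ∈ M.τ w ↔ i ∉ M.τ x) ∧ (i + 1 ∈ M.τ w ↔ i + 1 ∉ M.τ x) ∧
        ∀ h, (h + 1 < i ∨ h > i + 2) → (h ∈ M.τ w ↔ h ∈ M.τ x))) ∧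
    -- Axiom 3
    (∀ w x : V, ∀ i, 1 ≤ i → i + 1 ≤ n → M.Simple w x → ActivN M.τ w x i →
      ((i - 1 ∈ symmDiff (M.τ w) (M.τ x) → (i - 1 ∈ M.τ w ↔ i + 1 ∈ M.τ w)) ∧
       (i + 2 ∈ symmDiff (M.τ w) (M.τ x) → (i + 2 ∈ M.τ w ↔ i ∈ M.τ w)))) := by
  refine ⟨fun w i h1 h2 => ⟨M.BR i w h1 h2, fun ⟨_, hx, _⟩ => hx.2.xor_left⟩, ?_, ?_⟩
  · intro w x i _ _ hs ha
    have hc := M.bondCompatible hs.1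
    refine ⟨ha.mem_iff_notMem, ha.add_one_mem_iff_notMem, fun h hh => ?_⟩
    rcases ha with ⟨hiw, hix, h1x, h1w⟩ | ⟨hix, hiw, h1w, h1x⟩
    · exact hc.mem_iff_of_far ⟨hiw, hix⟩ ⟨h1x, h1w⟩ hh
    · exact (hc.symm.mem_iff_of_far ⟨hix, hiw⟩ ⟨h1w, h1x⟩ hh).symm
  · intro w x i h1 _ hs ha
    have hc := M.bondCompatible hs.1
    rcases ha with ⟨hiw, hix, h1x, h1w⟩ | ⟨hix, hiw, h1w, h1x⟩
    · exact ⟨fun h => (hc.sub_one_mem_iff ⟨h1x, h1w⟩ h1 h).1,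
        fun h => (hc.add_two_mem_iff ⟨hiw, hix⟩ h).1⟩
    · rw [symmDiff_comm]
      exact ⟨fun h => (hc.symm.sub_one_mem_iff ⟨h1w, h1x⟩ h1 h).2,
        fun h => (hc.symm.add_two_mem_iff ⟨hix, hiw⟩ h).2⟩
end

section
/- Every A₂-molecule is Kazhdan–Lusztig: its simple part is isomorphic, as a signed colored graph, to G_λ for one of the three partitions λ of 3. Concretely, every A₂-molecule is a single vertex with τ-invariant ∅ or {1,2}, or a two-vertex molecule with τ-invariants {1} and {2} joined by a simple edge activating the bond (1,2). -/
/-!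
A simple edge joins vertices with incomparable τ-invariants, and the only incomparable subsets
of `{1, 2}` are `{1}` and `{2}`; so every simple edge activates the bond `(1, 2)`, and the bonding
rule gives each vertex at most one simple neighbour, and exactly one when its τ-invariant is
`{1}` or `{2}`. By connectivity the molecule is then a single simple edge or a single vertex.
-/

open scoped Classical

lemma ActivN.xor {V : Type} {τ : V → Set ℕ} {u v : V} {i : ℕ} (h : ActivN τ u v i) :
    Xor (i ∈ τ u) (i + 1 ∈ τ u) := by
  rcases h with ⟨hi, -, -, hi'⟩ | ⟨-, hi, hi', -⟩
  · exact Or.inl ⟨hi, hi'⟩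
  · exact Or.inr ⟨hi', hi⟩

lemma Set.Icc_one_two : Set.Icc 1 2 = ({1, 2} : Set ℕ) := by
  ext k
  simp only [Set.mem_Icc, Set.mem_insert_iff, Set.mem_singleton_iff]
  omega

namespace AnMol

section

variable {n : ℕ} {V : Type} [Fintype V] (M : AnMol n V)

variable {M} in
lemma Simple.symm {u v : V} (h : M.Simple u v) : M.Simple v u := ⟨h.2, h.1⟩

lemma not_subset_of_simple {u v : V} (h : M.Simple u v) : ¬ M.τ u ⊆ M.τ v :=
  fun hs => h.1 (M.subset_zero u v hs)

lemma mem_of_simple_closed {S : Set V} {x : V} (hx : x ∈ S)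
    (hS : ∀ a b, a ∈ S → M.Simple a b → b ∈ S) (v : V) : v ∈ S := by
  induction M.connected x v with
  | refl => exact hx
  | tail _ hbc ih => exact hS _ _ ih hbc

lemma eq_of_simple_of_activN {i : ℕ} (hi : 1 ≤ i) (hin : i + 1 ≤ n) {u z w : V}
    (hz : M.Simple u z) (hzi : ActivN M.τ u z i) (hw : M.Simple u w) (hwi : ActivN M.τ u w i) :
    z = w :=
  (M.BR i u hi hin hzi.xor).unique ⟨hz, hzi⟩ ⟨hw, hwi⟩

end

section A₂

variable {V : Type} [Fintype V] (M : AnMol 2 V)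

lemma tau_subset_pair (v : V) : M.τ v ⊆ {1, 2} := Set.Icc_one_two ▸ M.τ_sub v

lemma tau_of_simple {u v : V} (h : M.Simple u v) :
    M.τ u = {1} ∧ M.τ v = {2} ∨ M.τ u = {2} ∧ M.τ v = {1} := by
  have huv := M.not_subset_of_simple h
  have hvu := M.not_subset_of_simple h.symm
  rcases Set.subset_pair_iff_eq.1 (M.tau_subset_pair u) with hu | hu | hu | hu <;>
    rcases Set.subset_pair_iff_eq.1 (M.tau_subset_pair v) with hv | hv | hv | hv <;>
    simp_all

lemma activN_of_simple {u v : V} (h : M.Simple u v) : ActivN M.τ u v 1 := by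
  rcases M.tau_of_simple h with ⟨hu, hv⟩ | ⟨hu, hv⟩ <;> simp [ActivN, hu, hv]

lemma eq_of_simple {u z w : V} (hz : M.Simple u z) (hw : M.Simple u w) : z = w :=
  M.eq_of_simple_of_activN le_rfl le_rfl hz (M.activN_of_simple hz) hw (M.activN_of_simple hw)

lemma tau_eq_empty_or_pair_of_not_xor {v : V} (h : ¬ Xor (1 ∈ M.τ v) (2 ∈ M.τ v)) :
    M.τ v = ∅ ∨ M.τ v = {1, 2} := by
  rcases Set.subset_pair_iff_eq.1 (M.tau_subset_pair v) with hv | hv | hv | hv <;>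
    simp_all [Xor]

end A₂

end AnMol

theorem stmt_16_general {V : Type} [Fintype V] (M : AnMol 2 V) :
    ((∀ u v : V, u = v) ∧
      (∀ v : V, M.τ v = ∅ ∨ M.τ v = ({1, 2} : Set ℕ))) ∨
    (∃ x y : V, x ≠ y ∧ (∀ v : V, v = x ∨ v = y) ∧
      M.τ x = ({1} : Set ℕ) ∧ M.τ y = ({2} : Set ℕ) ∧
      M.Simple x y ∧ ActivN M.τ x y 1) := by
  by_cases hedge : ∃ x y, M.Simple x y
  · right
    obtain ⟨x, y, hxy, hx, hy⟩ : ∃ x y, M.Simple x y ∧ M.τ x = {1} ∧ M.τ y = {2} := by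
      obtain ⟨x, y, hxy⟩ := hedge
      rcases M.tau_of_simple hxy with ⟨hx, hy⟩ | ⟨hx, hy⟩
      exacts [⟨x, y, hxy, hx, hy⟩, ⟨y, x, hxy.symm, hy, hx⟩]
    have hne : x ≠ y := fun h => by simp [h, hy] at hx
    have closed : ∀ a b, a ∈ ({x, y} : Set V) → M.Simple a b → b ∈ ({x, y} : Set V) := by
      rintro a b (rfl | rfl) hab
      · exact Or.inr (M.eq_of_simple hab hxy)
      · exact Or.inl (M.eq_of_simple hab hxy.symm)
    exact ⟨x, y, hne, M.mem_of_simple_closed (Set.mem_insert x _) closed, hx, hy, hxy,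
      M.activN_of_simple hxy⟩
  · push Not at hedge
    refine Or.inl ⟨fun u v => ?_, fun v => M.tau_eq_empty_or_pair_of_not_xor fun hxor => ?_⟩
    · exact (M.mem_of_simple_closed (S := {u}) rfl (fun a b _ h => (hedge a b h).elim) v).symm
    · obtain ⟨w, hw, -⟩ := M.BR 1 v le_rfl le_rfl hxor
      exact hedge v w hw.1

/-- Every `A₂`-molecule is Kazhdan–Lusztig: it is a single vertex with τ-invariant
`∅` or `{1,2}` (the graphs `G_{(3)}` and `G_{(1,1,1)}`), or two vertices with
τ-invariants `{1}` and `{2}` joined by a simple edge activating the bond `(1,2)`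
(the graph `G_{(2,1)}`). -/
theorem stmt_16 {V : Type} [Fintype V] [Nonempty V] (M : AnMol 2 V) :
    ((∀ u v : V, u = v) ∧
      (∀ v : V, M.τ v = ∅ ∨ M.τ v = ({1, 2} : Set ℕ))) ∨
    (∃ x y : V, x ≠ y ∧ (∀ v : V, v = x ∨ v = y) ∧
      M.τ x = ({1} : Set ℕ) ∧ M.τ y = ({2} : Set ℕ) ∧
      M.Simple x y ∧ ActivN M.τ x y 1) :=
  stmt_16_general M
end
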